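/- For 0 < k < 1 and 0 ≤ u ≤ K(k), Jacobi's zeta function satisfies zn(u) ≤ (E − k'²·K)·(1 − u/K), where E = E(k) and K = K(k). -/

import Mathlib

open Real intervalIntegral

/-- Complete elliptic integral of the first kind. -/
noncomputable def ellK (k : ℝ) : ℝ :=
  ∫ θ in (0:ℝ)..(π/2), 1 / Real.sqrt (1 - k^2 * (Real.sin θ)^2)

/-- Complete elliptic integral of the second kind. -/
noncomputable def ellE (k : ℝ) : ℝ :=
  ∫ θ in (0:ℝ)..(π/2), Real.sqrt (1 - k^2 * (Real.sin θ)^2)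

/-!
Put `am u = ∫₀ᵘ dn`. The quantity `(sn - sin ∘ am)² + (cn - cos ∘ am)²` has zero derivative
and vanishes at `0`, so `sn = sin ∘ am`; then `dn² = 1 - k² sn²` and `dn 0 = 1` force
`dn = Δ ∘ am` with `Δ θ = √(1 - k² sin² θ)`. The substitution `θ = am v` turns `u` and
`∫₀ᵘ dn²` into `F(am u)` and `E(am u)`, where `F(φ) = ∫₀^φ 1/Δ` and `E(φ) = ∫₀^φ Δ`, and
`u ≤ K = F(π/2)` gives `am u ≤ π/2`. The bound is then `E(φ) - k'² F(φ) ≤ E - k'² K` for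
`φ ≤ π/2`, which holds because `φ ↦ E(φ) - k'² F(φ)` has derivative
`Δ - k'²/Δ = k² cos² φ / Δ ≥ 0`.
-/
noncomputable def deltaAmplitude (k θ : ℝ) : ℝ := √(1 - k ^ 2 * sin θ ^ 2)

noncomputable def ellFInc (k φ : ℝ) : ℝ := ∫ θ in (0:ℝ)..φ, 1 / deltaAmplitude k θ

noncomputable def ellEInc (k φ : ℝ) : ℝ := ∫ θ in (0:ℝ)..φ, deltaAmplitude k θ

section DeltaAmplitude

variable {k : ℝ}

lemma one_sub_sq_mul_sin_sq_pos (hk : k ^ 2 < 1) (θ : ℝ) : 0 < 1 - k ^ 2 * sin θ ^ 2 := by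
  nlinarith [sin_sq_le_one θ, sq_nonneg k]

lemma deltaAmplitude_pos (hk : k ^ 2 < 1) (θ : ℝ) : 0 < deltaAmplitude k θ :=
  sqrt_pos.2 (one_sub_sq_mul_sin_sq_pos hk θ)

lemma deltaAmplitude_sq (hk : k ^ 2 < 1) (θ : ℝ) :
    deltaAmplitude k θ ^ 2 = 1 - k ^ 2 * sin θ ^ 2 :=
  sq_sqrt (one_sub_sq_mul_sin_sq_pos hk θ).le

@[simp]
lemma deltaAmplitude_zero : deltaAmplitude k 0 = 1 := by
  simp [deltaAmplitude]

lemma continuous_deltaAmplitude : Continuous (deltaAmplitude k) := by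
  unfold deltaAmplitude
  fun_prop

lemma continuous_one_div_deltaAmplitude (hk : k ^ 2 < 1) :
    Continuous fun θ => 1 / deltaAmplitude k θ :=
  continuous_const.div continuous_deltaAmplitude fun θ => (deltaAmplitude_pos hk θ).ne'

lemma hasDerivAt_ellFInc (hk : k ^ 2 < 1) (φ : ℝ) :
    HasDerivAt (ellFInc k) (1 / deltaAmplitude k φ) φ :=
  ((continuous_one_div_deltaAmplitude hk).integral_hasStrictDerivAt 0 φ).hasDerivAt

lemma hasDerivAt_ellEInc (φ : ℝ) : HasDerivAt (ellEInc k) (deltaAmplitude k φ) φ :=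
  (continuous_deltaAmplitude.integral_hasStrictDerivAt 0 φ).hasDerivAt

lemma strictMono_ellFInc (hk : k ^ 2 < 1) : StrictMono (ellFInc k) :=
  strictMono_of_hasDerivAt_pos (hasDerivAt_ellFInc hk) fun φ =>
    one_div_pos.2 (deltaAmplitude_pos hk φ)

lemma ellK_eq_ellFInc : ellK k = ellFInc k (π / 2) := rfl

lemma ellE_eq_ellEInc : ellE k = ellEInc k (π / 2) := rfl

lemma ellK_pos (hk : k ^ 2 < 1) : 0 < ellK k := by
  rw [ellK_eq_ellFInc, ← show ellFInc k 0 = 0 from integral_same]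
  exact strictMono_ellFInc hk (half_pos pi_pos)

lemma monotone_ellEInc_sub_mul_ellFInc (hk : k ^ 2 < 1) :
    Monotone fun φ => ellEInc k φ - (1 - k ^ 2) * ellFInc k φ := by
  refine monotone_of_hasDerivAt_nonneg
    (fun φ => (hasDerivAt_ellEInc φ).sub ((hasDerivAt_ellFInc hk φ).const_mul _)) fun φ => ?_
  have hΔ := deltaAmplitude_pos hk φ
  rw [Pi.zero_apply, sub_nonneg, mul_one_div, div_le_iff₀ hΔ, ← sq, deltaAmplitude_sq hk]
  nlinarith [sin_sq_le_one φ, sq_nonneg k]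

end DeltaAmplitude

lemma eq_of_forall_hasDerivAt_zero {f : ℝ → ℝ} (hf : ∀ x, HasDerivAt f 0 x) (x : ℝ) :
    f x = f 0 :=
  is_const_of_deriv_eq_zero (fun y => (hf y).differentiableAt) (fun y => (hf y).deriv) x 0

lemma eq_sin_comp_of_hasDerivAt {s c a a' : ℝ → ℝ}
    (hs : ∀ x, HasDerivAt s (c x * a' x) x) (hc : ∀ x, HasDerivAt c (-(s x * a' x)) x)
    (ha : ∀ x, HasDerivAt a (a' x) x) (hs0 : s 0 = sin (a 0)) (hc0 : c 0 = cos (a 0))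
    (x : ℝ) : s x = sin (a x) := by
  have hdist : ∀ x, HasDerivAt (fun x => (s x - sin (a x)) ^ 2 + (c x - cos (a x)) ^ 2) 0 x :=
    fun x => ((((hs x).sub (ha x).sin).pow 2).add (((hc x).sub (ha x).cos).pow 2)).congr_deriv
      (by simp only [Pi.sub_apply]; ring)
  have h := eq_of_forall_hasDerivAt_zero hdist x
  rw [hs0, hc0, sub_self, sub_self] at h
  have h' := (add_eq_zero_iff_of_nonneg (sq_nonneg _) (sq_nonneg _)).1 (h.trans (by norm_num))
  exact sub_eq_zero.1 (pow_eq_zero_iff two_ne_zero |>.1 h'.1)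

lemma sq_add_sq_mul_sq_eq_one_of_hasDerivAt {k : ℝ} {s c d : ℝ → ℝ} (hs0 : s 0 = 0)
    (hd0 : d 0 = 1) (hs : ∀ x, HasDerivAt s (c x * d x) x)
    (hd : ∀ x, HasDerivAt d (-(k ^ 2 * s x * c x)) x) (x : ℝ) :
    d x ^ 2 + k ^ 2 * s x ^ 2 = 1 := by
  have hconst : ∀ x, HasDerivAt (fun x => d x ^ 2 + k ^ 2 * s x ^ 2) 0 x :=
    fun x => (((hd x).pow 2).add (((hs x).pow 2).const_mul _)).congr_deriv (by ring)
  simpa [hs0, hd0] using eq_of_forall_hasDerivAt_zero hconst x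

section Jacobi

variable {k : ℝ} {sn cn dn am : ℝ → ℝ}

lemma dn_eq_deltaAmplitude_comp (hk : k ^ 2 < 1) (hsn0 : sn 0 = 0) (hcn0 : cn 0 = 1)
    (hdn0 : dn 0 = 1) (ham0 : am 0 = 0)
    (hsn : ∀ u, HasDerivAt sn (cn u * dn u) u) (hcn : ∀ u, HasDerivAt cn (-(sn u * dn u)) u)
    (hdn : ∀ u, HasDerivAt dn (-(k ^ 2 * sn u * cn u)) u) (ham : ∀ u, HasDerivAt am (dn u) u) :
    dn = deltaAmplitude k ∘ am := by
  have hsn_am := eq_sin_comp_of_hasDerivAt hsn hcn ham (by simp [hsn0, ham0])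
    (by simp [hcn0, ham0])
  have hsq : ∀ u, dn u ^ 2 = deltaAmplitude k (am u) ^ 2 := fun u => by
    rw [deltaAmplitude_sq hk, ← hsn_am]
    linarith [sq_add_sq_mul_sq_eq_one_of_hasDerivAt hsn0 hdn0 hsn hdn u]
  have hdn_cont : Continuous dn := Differentiable.continuous fun u => (hdn u).differentiableAt
  have ham_cont : Continuous am := Differentiable.continuous fun u => (ham u).differentiableAt
  funext u
  exact isPreconnected_univ.eq_of_sq_eq hdn_cont.continuousOn
    (continuous_deltaAmplitude.comp ham_cont).continuousOn (fun u _ => hsq u)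
    (fun _ => (deltaAmplitude_pos hk _).ne') (Set.mem_univ 0) (by simp [hdn0, ham0])
    (Set.mem_univ u)

lemma ellFInc_comp_eq (hk : k ^ 2 < 1) (ham0 : am 0 = 0) (ham : ∀ u, HasDerivAt am (dn u) u)
    (hdn : dn = deltaAmplitude k ∘ am) (u : ℝ) : ellFInc k (am u) = u := by
  have hsub := integral_comp_mul_deriv (a := 0) (b := u) (fun x _ => ham x)
    (hdn ▸ continuous_deltaAmplitude.comp
      (Differentiable.continuous fun u => (ham u).differentiableAt)).continuousOn
    (continuous_one_div_deltaAmplitude hk)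
  rw [ham0] at hsub
  rw [ellFInc, ← hsub, hdn]
  simp [(deltaAmplitude_pos hk _).ne']

lemma ellEInc_comp_eq (ham0 : am 0 = 0) (ham : ∀ u, HasDerivAt am (dn u) u)
    (hdn : dn = deltaAmplitude k ∘ am) (u : ℝ) :
    ellEInc k (am u) = ∫ v in (0:ℝ)..u, dn v ^ 2 := by
  have hsub := integral_comp_mul_deriv (a := 0) (b := u) (fun x _ => ham x)
    (hdn ▸ continuous_deltaAmplitude.comp
      (Differentiable.continuous fun u => (ham u).differentiableAt)).continuousOn
    (continuous_deltaAmplitude (k := k))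
  rw [ham0] at hsub
  rw [ellEInc, ← hsub, hdn]
  simp [sq]

end Jacobi

theorem zn_upper_bound_general (k : ℝ) (hk0 : 0 < k) (hk1 : k < 1)
    (sn cn dn : ℝ → ℝ)
    (hsn0 : sn 0 = 0) (hcn0 : cn 0 = 1) (hdn0 : dn 0 = 1)
    (hsn : ∀ u : ℝ, HasDerivAt sn (cn u * dn u) u)
    (hcn : ∀ u : ℝ, HasDerivAt cn (-(sn u * dn u)) u)
    (hdn : ∀ u : ℝ, HasDerivAt dn (-(k^2 * sn u * cn u)) u)
    (u : ℝ) (hu : u ≤ ellK k) :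
    (∫ v in (0:ℝ)..u, (dn v)^2) - u * ellE k / ellK k ≤
      (ellE k - (1 - k^2) * ellK k) * (1 - u / ellK k) := by
  have hk : k ^ 2 < 1 := by nlinarith
  set am : ℝ → ℝ := fun u => ∫ v in (0:ℝ)..u, dn v
  have ham0 : am 0 = 0 := integral_same
  have ham : ∀ u, HasDerivAt am (dn u) u := fun u =>
    ((Differentiable.continuous fun x => (hdn x).differentiableAt).integral_hasStrictDerivAt
      0 u).hasDerivAt
  have hdn_am := dn_eq_deltaAmplitude_comp hk hsn0 hcn0 hdn0 ham0 hsn hcn hdn ham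
  have hF := ellFInc_comp_eq hk ham0 ham hdn_am u
  have ham_le : am u ≤ π / 2 := (strictMono_ellFInc hk).le_iff_le.1 (hF.trans_le hu)
  have hbound := monotone_ellEInc_sub_mul_ellFInc hk ham_le
  beta_reduce at hbound
  rw [ellEInc_comp_eq ham0 ham hdn_am u, hF, ← ellE_eq_ellEInc, ← ellK_eq_ellFInc] at hbound
  have hK := ellK_pos hk
  have hrhs : (ellE k - (1 - k ^ 2) * ellK k) * (1 - u / ellK k)
      = ellE k - (1 - k ^ 2) * ellK k + (1 - k ^ 2) * u - u * ellE k / ellK k := by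
    field_simp
    ring
  linarith

theorem zn_upper_bound (k : ℝ) (hk0 : 0 < k) (hk1 : k < 1)
    (sn cn dn : ℝ → ℝ)
    (hsn0 : sn 0 = 0) (hcn0 : cn 0 = 1) (hdn0 : dn 0 = 1)
    (hsn : ∀ u : ℝ, HasDerivAt sn (cn u * dn u) u)
    (hcn : ∀ u : ℝ, HasDerivAt cn (-(sn u * dn u)) u)
    (hdn : ∀ u : ℝ, HasDerivAt dn (-(k^2 * sn u * cn u)) u)
    (u : ℝ) (hu0 : 0 ≤ u) (hu : u ≤ ellK k) :
    (∫ v in (0:ℝ)..u, (dn v)^2) - u * ellE k / ellK k ≤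
      (ellE k - (1 - k^2) * ellK k) * (1 - u / ellK k) :=
  zn_upper_bound_general k hk0 hk1 sn cn dn hsn0 hcn0 hdn0 hsn hcn hdn u hu
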